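/- For any Boolean algebra B, the structure (B_LETK^B, ∧̃, ∨̃) is a bounded lattice with top element T = (1,0,1) and bottom element F = (0,1,1): in particular z ∧̃ T = z and z ∨̃ F = z for all z ∈ B_LETK^B. -/

import Mathlib

/-!
By the prime ideal theorem, bounded lattice homomorphisms `B → Bool` separate the points of `B`.
Applied coordinatewise they preserve `BLETK` and commute with the twist operations, so closure,
associativity and absorption for `∧̃` reduce to the six-element algebra `BLETK Bool`, where they
are checked by computation; idempotence and `z ∧̃ T = z` only need `z₃ ≤ z₁ ⊔ z₂`.
The twist negation `(z₁, z₂, z₃) ↦ (z₂, z₁, z₃)` exchanges `∧̃` and `∨̃` definitionally, which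
turns each law of `∧̃` into the dual law of `∨̃`.
-/

/-- The set of snapshots over a Boolean algebra `B`. -/
def BLETK (B : Type*) [BooleanAlgebra B] : Set (B × B × B) :=
  {z | z.2.2 ≤ z.1 ⊔ z.2.1 ∧ z.1 ⊓ z.2.1 ⊓ z.2.2 = ⊥}

variable {B : Type*} [BooleanAlgebra B]

/-- Twist conjunction. -/
def tand (z w : B × B × B) : B × B × B :=
  (z.1 ⊓ w.1, z.2.1 ⊔ w.2.1,
   (z.1 ⊓ z.2.2 ⊓ w.1 ⊓ w.2.2) ⊔ (z.2.1 ⊓ z.2.2) ⊔ (w.2.1 ⊓ w.2.2))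

/-- Twist disjunction. -/
def tor (z w : B × B × B) : B × B × B :=
  (z.1 ⊔ w.1, z.2.1 ⊓ w.2.1,
   (z.2.1 ⊓ z.2.2 ⊓ w.2.1 ⊓ w.2.2) ⊔ (z.1 ⊓ z.2.2) ⊔ (w.1 ⊓ w.2.2))

/-- Twist negation. -/
def tneg (z : B × B × B) : B × B × B := (z.2.1, z.1, z.2.2)

/-- Twist classicality operator. -/
def tcirc (z : B × B × B) : B × B × B := (z.2.2, (z.2.2)ᶜ, ⊤)

/-- Twist implication. -/
def timp (z w : B × B × B) : B × B × B :=
  (z.1ᶜ ⊔ w.1, z.1 ⊓ w.2.1,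
   (z.1 ⊓ w.2.1 ⊓ w.2.2) ⊔ (z.2.1 ⊓ z.2.2) ⊔ (w.1 ⊓ w.2.2))

section PrimeSeparation

open Order

variable {α : Type*} [DistribLattice α] [BoundedOrder α]

open Classical in
noncomputable def Order.Ideal.IsPrime.boolHom {J : Ideal α} (hJ : J.IsPrime) :
    BoundedLatticeHom α Bool where
  toFun x := decide (x ∉ J)
  map_sup' x y := by
    show decide _ = (decide _ || decide _)
    rw [← Bool.decide_or, decide_eq_decide, ← not_and_or, not_iff_not]
    exact ⟨fun h => ⟨J.lower le_sup_left h, J.lower le_sup_right h⟩,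
      fun h => sup_mem h.1 h.2⟩
  map_inf' x y := by
    show decide _ = (decide _ && decide _)
    rw [← Bool.decide_and, decide_eq_decide, ← not_or, not_iff_not]
    exact ⟨hJ.mem_or_mem, fun h => h.elim (J.lower inf_le_left) (J.lower inf_le_right)⟩
  map_top' := by simpa using hJ.toIsProper.top_notMem
  map_bot' := by simp

open Classical in
theorem Order.Ideal.IsPrime.boolHom_eq_true {J : Ideal α} (hJ : J.IsPrime) {x : α} :
    hJ.boolHom x = true ↔ x ∉ J :=
  decide_eq_true_iff

theorem le_of_forall_boundedLatticeHom_bool {a b : α}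
    (h : ∀ f : BoundedLatticeHom α Bool, f a ≤ f b) : a ≤ b := by
  by_contra hab
  have hdisj : Disjoint ((PFilter.principal a : PFilter α) : Set α) (Ideal.principal b) :=
    Set.disjoint_left.mpr fun x hax hxb =>
      hab ((PFilter.mem_principal.mp hax).trans (Ideal.mem_principal.mp hxb))
  obtain ⟨J, hJ, hbJ, haJ⟩ := DistribLattice.prime_ideal_of_disjoint_filter_ideal hdisj
  have ha : a ∉ J := Set.disjoint_left.mp haJ (PFilter.mem_principal.mpr le_rfl)
  have hb : b ∈ J := hbJ Ideal.mem_principal_self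
  exact hJ.boolHom_eq_true.mp (Bool.le_iff_imp.mp (h hJ.boolHom) (hJ.boolHom_eq_true.mpr ha)) hb

theorem eq_of_forall_boundedLatticeHom_bool {a b : α}
    (h : ∀ f : BoundedLatticeHom α Bool, f a = f b) : a = b :=
  le_antisymm (le_of_forall_boundedLatticeHom_bool fun f => (h f).le)
    (le_of_forall_boundedLatticeHom_bool fun f => (h f).ge)

end PrimeSeparation

section Twist

variable {C : Type*} [BooleanAlgebra C]

def mapTriple (f : BoundedLatticeHom B C) (z : B × B × B) : C × C × C :=
  (f z.1, f z.2.1, f z.2.2)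

theorem mapTriple_tand (f : BoundedLatticeHom B C) (z w : B × B × B) :
    mapTriple f (tand z w) = tand (mapTriple f z) (mapTriple f w) := by
  simp [mapTriple, tand]

theorem mapTriple_tor (f : BoundedLatticeHom B C) (z w : B × B × B) :
    mapTriple f (tor z w) = tor (mapTriple f z) (mapTriple f w) := by
  simp [mapTriple, tor]

theorem mapTriple_mem_BLETK (f : BoundedLatticeHom B C) {z : B × B × B} (hz : z ∈ BLETK B) :
    mapTriple f z ∈ BLETK C :=
  ⟨by simpa [mapTriple] using OrderHomClass.mono f hz.1,
    by simpa [mapTriple] using congrArg f hz.2⟩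

theorem mem_BLETK_of_forall_mapTriple {z : B × B × B}
    (h : ∀ f : BoundedLatticeHom B Bool, mapTriple f z ∈ BLETK Bool) : z ∈ BLETK B :=
  ⟨le_of_forall_boundedLatticeHom_bool fun f => by simpa [mapTriple] using (h f).1,
    eq_of_forall_boundedLatticeHom_bool fun f => by simpa [mapTriple] using (h f).2⟩

theorem eq_of_forall_mapTriple {z w : B × B × B}
    (h : ∀ f : BoundedLatticeHom B Bool, mapTriple f z = mapTriple f w) : z = w := by
  ext
  · exact eq_of_forall_boundedLatticeHom_bool fun f => congrArg (·.1) (h f)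
  · exact eq_of_forall_boundedLatticeHom_bool fun f => congrArg (·.2.1) (h f)
  · exact eq_of_forall_boundedLatticeHom_bool fun f => congrArg (·.2.2) (h f)

theorem tand_mem_BLETK_bool :
    ∀ z ∈ BLETK Bool, ∀ w ∈ BLETK Bool, tand z w ∈ BLETK Bool := by
  unfold BLETK; decide

theorem tand_assoc_bool (z w u : Bool × Bool × Bool) :
    tand z (tand w u) = tand (tand z w) u := by
  revert z w u; decide

theorem tand_tor_self_bool :
    ∀ z ∈ BLETK Bool, ∀ w ∈ BLETK Bool, tand z (tor z w) = z := by
  unfold BLETK; decide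

theorem tand_mem_BLETK {z w : B × B × B} (hz : z ∈ BLETK B) (hw : w ∈ BLETK B) :
    tand z w ∈ BLETK B :=
  mem_BLETK_of_forall_mapTriple fun f => by
    rw [mapTriple_tand]
    exact tand_mem_BLETK_bool _ (mapTriple_mem_BLETK f hz) _ (mapTriple_mem_BLETK f hw)

theorem tand_assoc (z w u : B × B × B) : tand z (tand w u) = tand (tand z w) u :=
  eq_of_forall_mapTriple fun f => by
    simp only [mapTriple_tand]
    exact tand_assoc_bool _ _ _

theorem tand_tor_self {z w : B × B × B} (hz : z ∈ BLETK B) (hw : w ∈ BLETK B) :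
    tand z (tor z w) = z :=
  eq_of_forall_mapTriple fun f => by
    rw [mapTriple_tand, mapTriple_tor]
    exact tand_tor_self_bool _ (mapTriple_mem_BLETK f hz) _ (mapTriple_mem_BLETK f hw)

theorem tand_comm (z w : B × B × B) : tand z w = tand w z := by
  simp only [tand, inf_comm z.1, sup_comm z.2.1, Prod.mk.injEq, true_and]
  ac_rfl

theorem tand_self {z : B × B × B} (hz : z ∈ BLETK B) : tand z z = z := by
  simp [tand, ← inf_sup_right, hz.1]

theorem tand_top {z : B × B × B} (hz : z ∈ BLETK B) : tand z (⊤, ⊥, ⊤) = z := by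
  simp [tand, ← inf_sup_right, hz.1]

theorem tneg_mem_BLETK {z : B × B × B} (hz : z ∈ BLETK B) : tneg z ∈ BLETK B :=
  ⟨by simpa [tneg, sup_comm] using hz.1, by simpa [tneg, inf_comm] using hz.2⟩

theorem tneg_tneg {α : Type*} (z : α × α × α) : tneg (tneg z) = z :=
  rfl

theorem tor_eq_tneg_tand (z w : B × B × B) : tor z w = tneg (tand (tneg z) (tneg w)) :=
  rfl

theorem tneg_tand (z w : B × B × B) : tneg (tand z w) = tor (tneg z) (tneg w) :=
  rfl

theorem tor_mem_BLETK {z w : B × B × B} (hz : z ∈ BLETK B) (hw : w ∈ BLETK B) :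
    tor z w ∈ BLETK B :=
  tneg_mem_BLETK (tand_mem_BLETK (tneg_mem_BLETK hz) (tneg_mem_BLETK hw))

theorem tor_comm (z w : B × B × B) : tor z w = tor w z := by
  rw [tor_eq_tneg_tand, tand_comm, tor_eq_tneg_tand]

theorem tor_assoc (z w u : B × B × B) : tor z (tor w u) = tor (tor z w) u := by
  simp only [tor_eq_tneg_tand, tneg_tneg, tand_assoc]

theorem tor_self {z : B × B × B} (hz : z ∈ BLETK B) : tor z z = z :=
  congrArg tneg (tand_self (tneg_mem_BLETK hz))

theorem tor_bot {z : B × B × B} (hz : z ∈ BLETK B) : tor z (⊥, ⊤, ⊤) = z :=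
  congrArg tneg (tand_top (tneg_mem_BLETK hz))

theorem tor_tand_self {z w : B × B × B} (hz : z ∈ BLETK B) (hw : w ∈ BLETK B) :
    tor z (tand z w) = z := by
  rw [tor_eq_tneg_tand, tneg_tand z w, tand_tor_self (tneg_mem_BLETK hz) (tneg_mem_BLETK hw)]
  rfl

end Twist

theorem stmt7 :
    -- the top and bottom elements are snapshots
    ((⊤, ⊥, ⊤) : B × B × B) ∈ BLETK B ∧ ((⊥, ⊤, ⊤) : B × B × B) ∈ BLETK B ∧
    -- closure under the lattice operations
    (∀ z ∈ BLETK B, ∀ w ∈ BLETK B, tand z w ∈ BLETK B ∧ tor z w ∈ BLETK B) ∧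
    -- idempotence
    (∀ z ∈ BLETK B, tand z z = z ∧ tor z z = z) ∧
    -- commutativity
    (∀ z ∈ BLETK B, ∀ w ∈ BLETK B, tand z w = tand w z ∧ tor z w = tor w z) ∧
    -- associativity
    (∀ z ∈ BLETK B, ∀ w ∈ BLETK B, ∀ u ∈ BLETK B,
      tand z (tand w u) = tand (tand z w) u ∧ tor z (tor w u) = tor (tor z w) u) ∧
    -- absorption
    (∀ z ∈ BLETK B, ∀ w ∈ BLETK B, tor z (tand z w) = z ∧ tand z (tor z w) = z) ∧
    -- bounds: T = (1,0,1) is the top and F = (0,1,1) is the bottom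
    (∀ z ∈ BLETK B, tand z ((⊤, ⊥, ⊤) : B × B × B) = z ∧
      tor z ((⊥, ⊤, ⊤) : B × B × B) = z) := by
  refine ⟨by simp [BLETK], by simp [BLETK],
    fun z hz w hw => ⟨tand_mem_BLETK hz hw, tor_mem_BLETK hz hw⟩,
    fun z hz => ⟨tand_self hz, tor_self hz⟩,
    fun z _ w _ => ⟨tand_comm z w, tor_comm z w⟩,
    fun z _ w _ u _ => ⟨tand_assoc z w u, tor_assoc z w u⟩,
    fun z hz w hw => ⟨tor_tand_self hz hw, tand_tor_self hz hw⟩,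
    fun z hz => ⟨tand_top hz, tor_bot hz⟩⟩
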